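/- Let S be a finite nonempty set, κ a Markov kernel on S, and s₀ ∈ S. Then P_{s₀}-almost every trajectory ω : ℕ → S satisfies: for every k ∈ ℕ there exists N such that for all n ≥ N, the prefix ω_0 ⋯ ω_n is closed and m_{ω_0⋯ω_n} ≥ k. In particular, for any p_min ∈ (0,1), the confidence γ(ω_0⋯ω_n) := (1/(1−p_min))^{m_{ω_0⋯ω_n}} tends to infinity as n → ∞, P_{s₀}-almost surely. -/

import Mathlib

open MeasureTheory Filter

/-- The edge relation of the trace graph of the prefix `ω 0 ⋯ ω n`. -/
def traceEdge {S : Type*} (ω : ℕ → S) (n : ℕ) (a b : S) : Prop :=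
  ∃ i < n, ω i = a ∧ ω (i + 1) = b

/-- Reachability in the trace graph of the prefix `ω 0 ⋯ ω n`. -/
def traceReach {S : Type*} (ω : ℕ → S) (n : ℕ) : S → S → Prop :=
  Relation.ReflTransGen (traceEdge ω n)

/-- `#_π(a)` for the prefix `π = ω 0 ⋯ ω n`: the number of occurrences of `a`
among `ω 0, …, ω (n-1)`. -/
def traceCount {S : Type*} [DecidableEq S] (ω : ℕ → S) (n : ℕ) (a : S) : ℕ :=
  ((Finset.range n).filter (fun i => ω i = a)).card

/-- `m_π` for the prefix `π = ω 0 ⋯ ω n` of a trajectory: the minimum of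
`#_π(b)` over the states `b` of the mutual-reachability class of the last
state `ω n` in the trace graph of the prefix (for a closed prefix this class
is the unique bottom SCC of the trace graph). -/
noncomputable def traceM {S : Type*} [DecidableEq S] (ω : ℕ → S) (n : ℕ) : ℕ :=
  sInf (traceCount ω n '' {v | traceReach ω n (ω n) v ∧ traceReach ω n v (ω n)})

/-!
By the Markov property, the probability that the first `m` visits to a state `a` after time `N`
are all followed by a step other than to `b` is at most `(1 - κ a b) ^ m`. Hence, almost surely,
a trajectory takes no step of probability zero, and from every state it visits infinitely often
it takes every step of positive probability infinitely often. The states visited infinitely often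
are then closed under the edges of the trace graph, and the trajectory eventually stays among
them; once each of them has been visited `k` times, the class of the current state consists of
states occurring at least `k` times in the prefix, and the prefix is closed.
-/

namespace MarkovTrace

open Finset Function Preorder

variable {S : Type*}

section Prefixes

def prefixCylinder (n : ℕ) (f : ℕ → S) : Set (ℕ → S) := {ω | ∀ i ≤ n, ω i = f i}

lemma preimage_frestrictLe_singleton (n : ℕ) (f : ℕ → S) :
    frestrictLe (π := fun _ => S) n ⁻¹' {frestrictLe n f} = prefixCylinder n f := by
  ext ω
  simp only [Set.mem_preimage, Set.mem_singleton_iff, funext_iff, frestrictLe_apply,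
    Subtype.forall, Finset.mem_Iic]
  rfl

lemma preimage_image_frestrictLe {n : ℕ} {A : Set (ℕ → S)} (hA : DependsOn (· ∈ A) (Set.Iic n)) :
    frestrictLe n ⁻¹' (frestrictLe n '' A) = A := by
  refine (Set.subset_preimage_image _ _).antisymm' ?_
  rintro ω ⟨ω', hω', hres⟩
  exact Eq.mp (hA fun i hi => congrFun hres ⟨i, Finset.mem_Iic.2 hi⟩) hω'

lemma dependsOn_mem_of_imp {n : ℕ} {A : Set (ℕ → S)}
    (h : ∀ ω ω' : ℕ → S, (∀ i ≤ n, ω i = ω' i) → ω ∈ A → ω' ∈ A) :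
    DependsOn (· ∈ A) (Set.Iic n) :=
  fun ω ω' hωω' => propext ⟨h ω ω' hωω', h ω' ω fun i hi => (hωω' i hi).symm⟩

variable [MeasurableSpace S]

variable [MeasurableSingletonClass S]

lemma measurableSet_coord_eq (i : ℕ) (a : S) : MeasurableSet {ω : ℕ → S | ω i = a} :=
  measurable_pi_apply (X := fun _ => S) i (measurableSet_singleton a)

lemma measurableSet_of_dependsOn [Finite S] {n : ℕ} {A : Set (ℕ → S)}
    (hA : DependsOn (· ∈ A) (Set.Iic n)) : MeasurableSet A := by
  rw [← preimage_image_frestrictLe hA]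
  exact (Set.toFinite _).measurableSet.preimage (measurable_frestrictLe n)

end Prefixes

section MarkovProperty

variable [MeasurableSpace S]

/-- `P` is the law of a Markov chain with kernel `κ` and an arbitrary initial law. -/
def IsMarkovChainLaw (κ : S → PMF S) (P : Measure (ℕ → S)) : Prop :=
  ∀ n f, P (prefixCylinder (n + 1) f) = P (prefixCylinder n f) * κ (f n) (f (n + 1))

variable {κ : S → PMF S} {P : Measure (ℕ → S)}

lemma measure_prefixCylinder_inter_coord_eq (hP : IsMarkovChainLaw κ P) (n : ℕ) (f : ℕ → S)
    (b : S) :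
    P (prefixCylinder n f ∩ {ω | ω (n + 1) = b}) = κ (f n) b * P (prefixCylinder n f) := by
  have hcyl : prefixCylinder n f ∩ {ω | ω (n + 1) = b} =
      prefixCylinder (n + 1) (Function.update f (n + 1) b) := by
    ext ω
    simp only [prefixCylinder, Set.mem_inter_iff, Nat.le_succ_iff_eq_or_le]
    constructor
    · rintro ⟨hf, hb⟩ i (rfl | hi)
      · simpa using hb
      · rw [Function.update_of_ne (by omega), hf i hi]
    · intro h
      refine ⟨fun i hi => ?_, by simpa using h (n + 1) (Or.inl rfl)⟩
      rw [h i (Or.inr hi), Function.update_of_ne (by omega)]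
  have hagree : prefixCylinder n (Function.update f (n + 1) b) = prefixCylinder n f := by
    ext ω
    refine forall₂_congr fun i hi => ?_
    rw [Function.update_of_ne (by omega)]
  rw [hcyl, hP, hagree, Function.update_self, Function.update_of_ne (by omega), mul_comm]

variable [MeasurableSingletonClass S] [Finite S]

theorem measure_inter_coord_eq (hP : IsMarkovChainLaw κ P) {n : ℕ} {A : Set (ℕ → S)}
    (hA : DependsOn (· ∈ A) (Set.Iic n)) {a : S} (ha : ∀ ω ∈ A, ω n = a) (b : S) :
    P (A ∩ {ω | ω (n + 1) = b}) = κ a b * P A := by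
  set T := (Set.toFinite (frestrictLe n '' A)).toFinset
  have hAT : A = frestrictLe n ⁻¹' T := by
    rw [Set.Finite.coe_toFinset, preimage_image_frestrictLe hA]
  have hfib : ∀ g ∈ T, MeasurableSet (frestrictLe (π := fun _ => S) n ⁻¹' {g}) := fun g _ =>
    (measurableSet_singleton g).preimage (measurable_frestrictLe n)
  have hsum : ∀ μ : Measure (ℕ → S), μ A = ∑ g ∈ T, μ (frestrictLe (π := fun _ => S) n ⁻¹' {g}) := fun μ => by
    rw [sum_measure_preimage_singleton T hfib, ← hAT]
  rw [← Measure.restrict_apply' (measurableSet_coord_eq (n + 1) b), hsum, hsum, mul_sum]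
  refine sum_congr rfl fun g hg => ?_
  obtain ⟨f, hf, rfl⟩ := (Set.Finite.mem_toFinset _).1 hg
  rw [Measure.restrict_apply' (measurableSet_coord_eq (n + 1) b), preimage_frestrictLe_singleton,
    measure_prefixCylinder_inter_coord_eq hP, ha f hf]

theorem measure_inter_coord_ne [IsFiniteMeasure P] (hP : IsMarkovChainLaw κ P) {n : ℕ}
    {A : Set (ℕ → S)} (hA : DependsOn (· ∈ A) (Set.Iic n)) {a : S} (ha : ∀ ω ∈ A, ω n = a)
    (b : S) :
    P (A ∩ {ω | ω (n + 1) ≠ b}) = (1 - κ a b) * P A := by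
  have h := measure_inter_add_sdiff (μ := P) A (measurableSet_coord_eq (n + 1) b)
  rw [measure_inter_coord_eq hP hA ha] at h
  rw [ENNReal.sub_mul fun _ _ => measure_ne_top P A, one_mul]
  exact ENNReal.eq_sub_of_add_eq (ENNReal.mul_ne_top (PMF.apply_ne_top _ _) (measure_ne_top P A))
    (by rw [add_comm]; exact h)

end MarkovProperty

section TraceCount

variable [DecidableEq S] {ω ω' : ℕ → S}

lemma traceCount_succ (ω : ℕ → S) (n : ℕ) (a : S) :
    traceCount ω (n + 1) a = traceCount ω n a + if ω n = a then 1 else 0 := by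
  unfold traceCount
  rw [range_add_one, filter_insert]
  split_ifs
  · exact card_insert_of_notMem (by simp)
  · rfl

lemma traceCount_mono (ω : ℕ → S) (a : S) : Monotone (traceCount ω · a) :=
  fun _ _ h => card_le_card (filter_subset_filter _ (range_subset_range.2 h))

lemma traceCount_congr {n : ℕ} (h : ∀ i < n, ω i = ω' i) (a : S) :
    traceCount ω n a = traceCount ω' n a := by
  unfold traceCount
  congr 1
  exact filter_congr fun i hi => by rw [h i (mem_range.1 hi)]

lemma tendsto_traceCount_atTop {a : S} (h : ∃ᶠ n in atTop, ω n = a) :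
    Tendsto (traceCount ω · a) atTop atTop := by
  refine tendsto_atTop.2 fun k => ?_
  induction k with
  | zero => exact Eventually.of_forall fun _ => Nat.zero_le _
  | succ k ih =>
    obtain ⟨n, hk, hn⟩ := (ih.and_frequently h).exists
    refine (eventually_ge_atTop (n + 1)).mono fun m hm => ?_
    have hsucc := traceCount_succ ω n a
    have hmono : traceCount ω (n + 1) a ≤ traceCount ω m a := traceCount_mono ω a hm
    rw [if_pos hn] at hsucc
    omega

lemma exists_lt_eq_of_one_le_traceCount {n : ℕ} (h : 1 ≤ traceCount ω n (ω n)) :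
    ∃ i < n, ω i = ω n := by
  obtain ⟨i, hi⟩ := card_pos.1 h
  rw [mem_filter, mem_range] at hi
  exact ⟨i, hi⟩

end TraceCount

section EdgeSkipping

variable [DecidableEq S] (a b : S) (N : ℕ)

def SkipsEdgeBefore (n : ℕ) (ω : ℕ → S) : Prop :=
  ∀ i, N ≤ i → i < n → ω i = a → ω (i + 1) ≠ b

def skipsEdge (m : ℕ) : Set (ℕ → S) :=
  {ω | ∃ n, traceCount ω N a + m ≤ traceCount ω n a ∧ SkipsEdgeBefore a b N n ω}

/-- The `(m + 1)`-st visit to `a` from time `N` on happens at time `n`, and none of the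
earlier ones is followed by a step to `b`. -/
def skipsEdgeAt (m n : ℕ) : Set (ℕ → S) :=
  {ω | N ≤ n ∧ ω n = a ∧ traceCount ω n a = traceCount ω N a + m ∧ SkipsEdgeBefore a b N n ω}

variable {a b N}

lemma skipsEdgeAt_subset_skipsEdge (m n : ℕ) : skipsEdgeAt a b N m n ⊆ skipsEdge a b N m :=
  fun _ hω => ⟨n, hω.2.2.1.ge, hω.2.2.2⟩

lemma dependsOn_skipsEdgeAt (m n : ℕ) : DependsOn (· ∈ skipsEdgeAt a b N m n) (Set.Iic n) := by
  refine dependsOn_mem_of_imp fun ω ω' h ⟨hN, ha, hcount, hskip⟩ => ⟨hN, h n le_rfl ▸ ha, ?_, ?_⟩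
  · rw [← traceCount_congr (fun i hi => h i (by omega)),
      ← traceCount_congr (fun i hi => h i (by omega)), hcount]
  · intro i hNi hin hia
    rw [← h (i + 1) hin]
    exact hskip i hNi hin (by rw [h i hin.le]; exact hia)

lemma pairwise_disjoint_skipsEdgeAt (m : ℕ) : Pairwise (Disjoint on skipsEdgeAt a b N m) := by
  have key : ∀ n n', n < n' → Disjoint (skipsEdgeAt a b N m n) (skipsEdgeAt a b N m n') := by
    refine fun n n' hlt => Set.disjoint_left.2 fun ω ⟨_, ha, hcount, _⟩ ⟨_, _, hcount', _⟩ => ?_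
    have hsucc := traceCount_succ ω n a
    have hmono : traceCount ω (n + 1) a ≤ traceCount ω n' a := traceCount_mono ω a hlt
    rw [if_pos ha] at hsucc
    omega
  intro n n' hne
  rcases hne.lt_or_gt with hlt | hlt
  exacts [key n n' hlt, (key n' n hlt).symm]

/-- The `(m + 1)`-st visit to `a` from time `N` on is the last one before the count reaches
`m + 1`. -/
lemma skipsEdge_succ_subset (m : ℕ) :
    skipsEdge a b N (m + 1) ⊆ ⋃ n, skipsEdgeAt a b N m n ∩ {ω | ω (n + 1) ≠ b} := by
  rintro ω ⟨n, hcount, hskip⟩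
  induction n with
  | zero => simp [traceCount] at hcount
  | succ n ih =>
    have hskip' : SkipsEdgeBefore a b N n ω := fun i hNi hin => hskip i hNi (by omega)
    by_cases hle : traceCount ω N a + (m + 1) ≤ traceCount ω n a
    · exact ih hle hskip'
    have hsucc := traceCount_succ ω n a
    split_ifs at hsucc with ha
    · have hN : N ≤ n := by
        by_contra! hn
        have : traceCount ω (n + 1) a ≤ traceCount ω N a := traceCount_mono ω a (by omega)
        omega
      exact Set.mem_iUnion.2 ⟨n, ⟨hN, ha, by omega, hskip'⟩, hskip n hN (by omega) ha⟩
    · omega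

variable [MeasurableSpace S] [MeasurableSingletonClass S] [Finite S]
  {κ : S → PMF S} {P : Measure (ℕ → S)} [IsProbabilityMeasure P]

theorem measure_skipsEdge_le (hP : IsMarkovChainLaw κ P) (m : ℕ) :
    P (skipsEdge a b N m) ≤ (1 - κ a b) ^ m := by
  induction m with
  | zero => exact (pow_zero (1 - κ a b)).symm ▸ prob_le_one
  | succ m ih =>
    calc P (skipsEdge a b N (m + 1))
        ≤ ∑' n, P (skipsEdgeAt a b N m n ∩ {ω | ω (n + 1) ≠ b}) :=
          (measure_mono (skipsEdge_succ_subset m)).trans (measure_iUnion_le _)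
      _ = ∑' n, (1 - κ a b) * P (skipsEdgeAt a b N m n) := by
          congr 1
          ext n
          exact measure_inter_coord_ne hP (dependsOn_skipsEdgeAt m n) (fun _ hω => hω.2.1) b
      _ = (1 - κ a b) * P (⋃ n, skipsEdgeAt a b N m n) := by
          rw [ENNReal.tsum_mul_left, measure_iUnion (pairwise_disjoint_skipsEdgeAt m)
            fun n => measurableSet_of_dependsOn (dependsOn_skipsEdgeAt m n)]
      _ ≤ (1 - κ a b) * (1 - κ a b) ^ m := by
          gcongr
          exact (measure_mono (Set.iUnion_subset (skipsEdgeAt_subset_skipsEdge m))).trans ih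
      _ = (1 - κ a b) ^ (m + 1) := (pow_succ' _ _).symm

end EdgeSkipping

section AlmostSure

variable [MeasurableSpace S] [MeasurableSingletonClass S] [Finite S]
  {κ : S → PMF S} {P : Measure (ℕ → S)}

lemma ae_transition_ne_zero (hP : IsMarkovChainLaw κ P) :
    ∀ᵐ ω ∂P, ∀ j, κ (ω j) (ω (j + 1)) ≠ 0 := by
  refine ae_all_iff.2 fun j => ?_
  rw [ae_iff]
  refine measure_mono_null (t := ⋃ (x) (y) (_ : κ x y = 0), {ω | ω j = x} ∩ {ω | ω (j + 1) = y})
    (fun ω hω => Set.mem_iUnion₂.2 ⟨ω j, ω (j + 1), Set.mem_iUnion.2 ⟨not_not.1 hω, rfl, rfl⟩⟩) ?_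
  simp only [measure_iUnion_null_iff]
  intro x y hxy
  have hdep : DependsOn (· ∈ {ω : ℕ → S | ω j = x}) (Set.Iic j) :=
    dependsOn_mem_of_imp fun ω ω' h hω => (h j le_rfl).symm.trans hω
  rw [measure_inter_coord_eq hP hdep (fun _ hω => hω), hxy, zero_mul]

lemma ae_frequently_edge [DecidableEq S] [IsProbabilityMeasure P] (hP : IsMarkovChainLaw κ P)
    {a b : S} (hab : κ a b ≠ 0) :
    ∀ᵐ ω ∂P, (∃ᶠ n in atTop, ω n = a) → ∃ᶠ n in atTop, ω n = a ∧ ω (n + 1) = b := by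
  rw [ae_iff]
  refine measure_mono_null (t := ⋃ N, ⋂ m, skipsEdge a b N m) ?_ (measure_iUnion_null fun N => ?_)
  · intro ω hω
    simp only [Classical.not_imp, not_frequently, eventually_atTop] at hω
    obtain ⟨hfreq, N, hN⟩ := hω
    refine Set.mem_iUnion.2 ⟨N, Set.mem_iInter.2 fun m => ?_⟩
    obtain ⟨n, hn⟩ := eventually_atTop.1
      ((tendsto_traceCount_atTop hfreq).eventually_ge_atTop (traceCount ω N a + m))
    exact ⟨n, hn n le_rfl, fun i hNi _ hia hib => hN i hNi ⟨hia, hib⟩⟩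
  · have hlt : 1 - κ a b < 1 := ENNReal.sub_lt_self ENNReal.one_ne_top one_ne_zero hab
    refine le_antisymm (ge_of_tendsto' (ENNReal.tendsto_pow_atTop_nhds_zero_of_lt_one hlt)
      fun m => ?_) zero_le
    exact (measure_mono (Set.iInter_subset _ m)).trans (measure_skipsEdge_le hP m)

theorem ae_frequently_step [DecidableEq S] [IsProbabilityMeasure P] (hP : IsMarkovChainLaw κ P) :
    ∀ᵐ ω ∂P, ∀ i, (∃ᶠ n in atTop, ω n = ω i) →
      ∃ᶠ n in atTop, ω n = ω i ∧ ω (n + 1) = ω (i + 1) := by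
  have hedge : ∀ᵐ ω ∂P, ∀ a b : S, κ a b ≠ 0 →
      (∃ᶠ n in atTop, ω n = a) → ∃ᶠ n in atTop, ω n = a ∧ ω (n + 1) = b := by
    simp only [ae_all_iff, eventually_imp_distrib_left]
    exact fun a b hab => ae_frequently_edge hP hab
  filter_upwards [ae_transition_ne_zero hP, hedge] with ω hpos hω i
  exact hω _ _ (hpos i)

end AlmostSure

section Recurrence

variable {ω : ℕ → S}

lemma eventually_frequently_eq [Finite S] (ω : ℕ → S) :
    ∀ᶠ n in atTop, ∃ᶠ m in atTop, ω m = ω n := by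
  have h : ∀ s, ∀ᶠ n in atTop, (∃ᶠ m in atTop, ω m = s) ∨ ω n ≠ s := fun s => by
    by_cases hs : ∃ᶠ m in atTop, ω m = s
    · exact Eventually.of_forall fun _ => Or.inl hs
    · exact (not_frequently.1 hs).mono fun _ => Or.inr
  exact (eventually_all.2 h).mono fun n hn => (hn (ω n)).resolve_right fun h => h rfl

lemma frequently_of_traceReach
    (hω : ∀ i, (∃ᶠ n in atTop, ω n = ω i) → ∃ᶠ n in atTop, ω n = ω i ∧ ω (n + 1) = ω (i + 1))
    {n : ℕ} {u v : S} (huv : traceReach ω n u v) (hu : ∃ᶠ m in atTop, ω m = u) :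
    ∃ᶠ m in atTop, ω m = v := by
  induction huv with
  | refl => exact hu
  | tail _ hedge ih =>
    obtain ⟨i, -, rfl, rfl⟩ := hedge
    exact (tendsto_add_atTop_nat 1).frequently ((hω i ih).mono fun _ h => h.2)

/-- Eventually the trajectory stays among its recurrent states, which the trace graph cannot
leave, and every recurrent state has been visited at least `k` times. -/
theorem eventually_closed_and_le_traceM [Finite S] [DecidableEq S]
    (hω : ∀ i, (∃ᶠ n in atTop, ω n = ω i) → ∃ᶠ n in atTop, ω n = ω i ∧ ω (n + 1) = ω (i + 1))
    (k : ℕ) : ∀ᶠ n in atTop, (∃ i < n, ω i = ω n) ∧ k ≤ traceM ω n := by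
  have hcount : ∀ᶠ n in atTop, ∀ s, (∃ᶠ m in atTop, ω m = s) → max k 1 ≤ traceCount ω n s :=
    eventually_all.2 fun s => by
      by_cases hs : ∃ᶠ m in atTop, ω m = s
      · exact ((tendsto_traceCount_atTop hs).eventually_ge_atTop _).mono fun _ h _ => h
      · exact Eventually.of_forall fun _ h => absurd h hs
  filter_upwards [eventually_frequently_eq ω, hcount] with n hrec hcnt
  have hclass : ∀ v, traceReach ω n (ω n) v → max k 1 ≤ traceCount ω n v :=
    fun v hv => hcnt v (frequently_of_traceReach hω hv hrec)
  refine ⟨exists_lt_eq_of_one_le_traceCount (le_of_max_le_right (hclass _ .refl)), ?_⟩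
  refine le_csInf ⟨_, ω n, ⟨.refl, .refl⟩, rfl⟩ ?_
  rintro _ ⟨v, ⟨hv, -⟩, rfl⟩
  exact le_of_max_le_left (hclass v hv)

end Recurrence

end MarkovTrace

open MarkovTrace

theorem ae_confidence_tendsto_atTop_general {S : Type*} [Fintype S] [DecidableEq S]
    [MeasurableSpace S] [MeasurableSingletonClass S]
    (κ : S → PMF S) (s₀ : S)
    (P : Measure (ℕ → S)) [IsProbabilityMeasure P]
    (hP : ∀ (k : ℕ) (f : ℕ → S),
      P {ω | ∀ i ≤ k, ω i = f i} =
        (if f 0 = s₀ then 1 else 0) * ∏ i ∈ Finset.range k, κ (f i) (f (i + 1))) :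
    ∀ᵐ ω ∂P,
      (∀ k : ℕ, ∃ N, ∀ n ≥ N, (∃ i < n, ω i = ω n) ∧ k ≤ traceM ω n) ∧
      ∀ pmin : ℝ, 0 < pmin → pmin < 1 →
        Tendsto (fun n => (1 / (1 - pmin)) ^ traceM ω n) atTop atTop := by
  have hmarkov : IsMarkovChainLaw κ P := fun n f => by
    rw [prefixCylinder, prefixCylinder, hP, hP, Finset.prod_range_succ, mul_assoc]
  filter_upwards [ae_frequently_step hmarkov] with ω hω
  have hM := eventually_closed_and_le_traceM hω
  refine ⟨fun k => eventually_atTop.1 (hM k), fun pmin h0 h1 => ?_⟩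
  have hgt : (1 : ℝ) < 1 / (1 - pmin) := one_lt_one_div (by linarith) (by linarith)
  exact (tendsto_pow_atTop_atTop_of_one_lt hgt).comp
    (tendsto_atTop.2 fun k => (hM k).mono fun _ h => h.2)

/-- Let `S` be a finite nonempty set, `κ` a Markov kernel on
`S`, `s₀ ∈ S`, and let `P` be the law on trajectory space of the Markov chain
started at `s₀` with kernel `κ` (characterized by its values on cylinders).
Then `P`-almost every trajectory `ω` satisfies: for every `k` all sufficiently
long prefixes `ω 0 ⋯ ω n` are closed and have `m_{ω 0 ⋯ ω n} ≥ k`; in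
particular, for any `p_min ∈ (0,1)` the confidence
`γ(ω 0 ⋯ ω n) = (1 / (1 - p_min)) ^ m_{ω 0 ⋯ ω n}` tends to infinity. -/
theorem ae_confidence_tendsto_atTop {S : Type*} [Fintype S] [Nonempty S] [DecidableEq S]
    [MeasurableSpace S] [MeasurableSingletonClass S]
    (κ : S → PMF S) (s₀ : S)
    (P : Measure (ℕ → S)) [IsProbabilityMeasure P]
    (hP : ∀ (k : ℕ) (f : ℕ → S),
      P {ω | ∀ i ≤ k, ω i = f i} =
        (if f 0 = s₀ then 1 else 0) * ∏ i ∈ Finset.range k, κ (f i) (f (i + 1))) :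
    ∀ᵐ ω ∂P,
      (∀ k : ℕ, ∃ N, ∀ n ≥ N, (∃ i < n, ω i = ω n) ∧ k ≤ traceM ω n) ∧
      ∀ pmin : ℝ, 0 < pmin → pmin < 1 →
        Tendsto (fun n => (1 / (1 - pmin)) ^ traceM ω n) atTop atTop :=
  ae_confidence_tendsto_atTop_general κ s₀ P hP
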